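/- Let μ > 1. There exists a unique real number ν in the open interval (μ−1, μ) satisfying (μ − ν)·e^ν = μ, and a sequence q ∈ S_μ satisfies F[q]_n = 0 for all n ∈ ℕ if and only if q = p̄, the zero-truncated Poisson distribution with parameter ν. In other words, p̄ is the unique equilibrium of the mean-field dispersion system in S_μ when μ > 1. -/

import Mathlib

/-- The generator of the mean-field dispersion process. -/
noncomputable def dispGen (μ : ℝ) (q : ℕ → ℝ) : ℕ → ℝ
  | 0 => -(μ - q 1) * q 0
  | 1 => 2 * q 2 - (μ - q 1) * (q 1 - q 0)
  | n + 2 => ((n : ℝ) + 3) * q (n + 3) - ((n : ℝ) + 2) * q (n + 2)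
      - (μ - q 1) * (q (n + 2) - q (n + 1))

/-- Membership in the state space `S_μ` of probability distributions on ℕ with mean `μ`. -/
def memS (μ : ℝ) (q : ℕ → ℝ) : Prop :=
  (∀ n, 0 ≤ q n ∧ q n ≤ 1) ∧ HasSum q 1 ∧ HasSum (fun n : ℕ => (n : ℝ) * q n) μ

/-- The zero-truncated Poisson distribution with parameter `ν`. -/
noncomputable def ztPoisson (ν : ℝ) : ℕ → ℝ
  | 0 => 0
  | n + 1 => ν ^ (n + 1) / ((Nat.factorial (n + 1) : ℝ) * (Real.exp ν - 1))

/-!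
At an equilibrium the equation for `n = 0` forces `q 0 = 0`, since `μ - q 1 > 0`; telescoping the
remaining equations leaves the first-order recurrence `(n + 2) q (n + 2) = (μ - q 1) q (n + 1)`,
so `q` is proportional to the zero-truncated Poisson law with parameter `λ = μ - q 1`, and total
mass one makes it equal. Evaluating at `1` gives `μ - λ = λ / (e^λ - 1)`, i.e. `(μ - λ) e^λ = μ`.
On `[μ - 1, ∞)` the map `ν ↦ (μ - ν) e^ν` is strictly decreasing, which pins `λ` down as the
unique root `ν`, whose existence in `(μ - 1, μ)` is the intermediate value theorem.
-/

open Real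

lemma strictAntiOn_sub_mul_exp (μ : ℝ) :
    StrictAntiOn (fun ν : ℝ => (μ - ν) * exp ν) (Set.Ici (μ - 1)) := by
  refine strictAntiOn_of_deriv_neg (convex_Ici _) (by fun_prop) fun x hx => ?_
  rw [interior_Ici, Set.mem_Ioi] at hx
  have hderiv : HasDerivAt (fun ν : ℝ => (μ - ν) * exp ν) ((0 - 1) * exp x + (μ - x) * exp x) x :=
    ((hasDerivAt_const x μ).sub (hasDerivAt_id' x)).mul (hasDerivAt_exp x)
  rw [hderiv.deriv]
  nlinarith [exp_pos x]

lemma exists_sub_mul_exp_eq {μ : ℝ} (hμ : 1 < μ) :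
    ∃ ν ∈ Set.Ioo (μ - 1) μ, (μ - ν) * exp ν = μ := by
  have hleft : μ < (μ - (μ - 1)) * exp (μ - 1) := by
    linarith [add_one_lt_exp (x := μ - 1) (by linarith)]
  have hright : (μ - μ) * exp μ < μ := by simp; linarith
  exact intermediate_value_Ioo' (by linarith) (by fun_prop) ⟨hright, hleft⟩

lemma exp_sub_one_ne_zero {x : ℝ} (hx : x ≠ 0) : exp x - 1 ≠ 0 :=
  sub_ne_zero.2 (mt (exp_eq_one_iff x).1 hx)

lemma ztPoisson_one (ν : ℝ) : ztPoisson ν 1 = ν / (exp ν - 1) := by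
  simp [ztPoisson]

lemma ztPoisson_recurrence (ν : ℝ) (n : ℕ) :
    ((n : ℝ) + 2) * ztPoisson ν (n + 2) = ν * ztPoisson ν (n + 1) := by
  simp only [ztPoisson, Nat.factorial_succ (n + 1)]
  push_cast
  rw [show (n : ℝ) + 1 + 1 = n + 2 by ring, mul_div_assoc', mul_assoc,
    mul_div_mul_left _ _ (by positivity), pow_succ', mul_div_assoc]

lemma hasSum_ztPoisson {ν : ℝ} (hν : ν ≠ 0) : HasSum (ztPoisson ν) 1 := by
  have hexp : HasSum (fun n : ℕ => ν ^ n / (n.factorial : ℝ)) (exp ν) := by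
    simpa [exp_eq_exp_ℝ] using NormedSpace.expSeries_div_hasSum_exp ν
  rw [← hasSum_nat_add_iff' 1] at hexp ⊢
  have h := hexp.div_const (exp ν - 1)
  simp only [Finset.sum_range_one, pow_zero, Nat.factorial_zero, Nat.cast_one, div_one,
    div_self (exp_sub_one_ne_zero hν), div_div] at h
  simpa [ztPoisson] using h

lemma sub_ztPoisson_one_eq_iff {μ ν : ℝ} (hν : ν ≠ 0) :
    μ - ztPoisson ν 1 = ν ↔ (μ - ν) * exp ν = μ := by
  rw [ztPoisson_one, sub_eq_iff_eq_add, ← sub_eq_iff_eq_add', eq_div_iff (exp_sub_one_ne_zero hν)]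
  constructor <;> intro h <;> linarith

lemma eq_ztPoisson_of_recurrence {q : ℕ → ℝ} {ν : ℝ} (hν : ν ≠ 0) (h0 : q 0 = 0)
    (hrec : ∀ n : ℕ, ((n : ℝ) + 2) * q (n + 2) = ν * q (n + 1)) (hq : HasSum q 1) :
    q = ztPoisson ν := by
  have hz1 : ztPoisson ν 1 ≠ 0 := by
    rw [ztPoisson_one]
    exact div_ne_zero hν (exp_sub_one_ne_zero hν)
  set c := q 1 / ztPoisson ν 1
  have hsucc : ∀ n : ℕ, q (n + 1) = c * ztPoisson ν (n + 1) := by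
    intro n
    induction n with
    | zero => exact (div_mul_cancel₀ _ hz1).symm
    | succ n ih =>
      apply mul_left_cancel₀ (show (n : ℝ) + 2 ≠ 0 by positivity)
      linear_combination hrec n + ν * ih - c * ztPoisson_recurrence ν n
  have hprop : q = fun n => c * ztPoisson ν n := by
    funext n
    cases n with
    | zero => simp [h0, ztPoisson]
    | succ n => exact hsucc n
  have hc : c = 1 := by
    linarith [(hprop ▸ hq).unique ((hasSum_ztPoisson hν).mul_left c)]
  simpa [hc] using hprop

lemma dispGen_eq_zero_iff {μ : ℝ} {q : ℕ → ℝ} (hq1 : q 1 ≠ μ) :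
    (∀ n, dispGen μ q n = 0) ↔
      q 0 = 0 ∧ ∀ n : ℕ, ((n : ℝ) + 2) * q (n + 2) = (μ - q 1) * q (n + 1) := by
  constructor
  · intro h
    have h0 : q 0 = 0 := by
      have := h 0
      simp only [dispGen, neg_mul, neg_eq_zero, mul_eq_zero] at this
      exact this.resolve_left (sub_ne_zero.2 hq1.symm)
    refine ⟨h0, fun n => ?_⟩
    induction n with
    | zero =>
      have h1 := h 1
      simp only [dispGen] at h1
      linear_combination h1 - (μ - q 1) * h0
    | succ n ih =>
      have h2 := h (n + 2)
      simp only [dispGen] at h2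
      push_cast
      linear_combination h2 + ih
  · rintro ⟨h0, hrec⟩ (_ | _ | n)
    · simp [dispGen, h0]
    · simp only [dispGen]
      linear_combination hrec 0 + (μ - q 1) * h0
    · have hnext := hrec (n + 1)
      simp only [dispGen]
      push_cast at hnext
      linear_combination hnext - hrec n

theorem ztPoisson_unique_equilibrium (μ : ℝ) (hμ : 1 < μ) :
    ∃! ν : ℝ, ν ∈ Set.Ioo (μ - 1) μ ∧ (μ - ν) * Real.exp ν = μ ∧
      ∀ q : ℕ → ℝ, memS μ q → ((∀ n, dispGen μ q n = 0) ↔ q = ztPoisson ν) := by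
  obtain ⟨ν, hνI, hνeq⟩ := exists_sub_mul_exp_eq hμ
  have hν : ν ≠ 0 := by linarith [hνI.1]
  have hinj := (strictAntiOn_sub_mul_exp μ).injOn
  refine ⟨ν, ⟨hνI, hνeq, fun q hq => ?_⟩, fun ν' ⟨hν'I, hν'eq, _⟩ =>
    hinj hν'I.1.le hνI.1.le (hν'eq.trans hνeq.symm)⟩
  have hq1 : q 1 ≤ 1 := (hq.1 1).2
  rw [dispGen_eq_zero_iff (by linarith)]
  constructor
  · rintro ⟨h0, hrec⟩
    have hl : μ - q 1 ≠ 0 := by linarith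
    have hq := eq_ztPoisson_of_recurrence hl h0 hrec hq.2.1
    have hleq := (sub_ztPoisson_one_eq_iff hl).1 (by rw [← congrFun hq 1])
    rwa [hinj (show μ - 1 ≤ μ - q 1 by linarith) hνI.1.le (hleq.trans hνeq.symm)] at hq
  · rintro rfl
    rw [(sub_ztPoisson_one_eq_iff hν).2 hνeq]
    exact ⟨rfl, ztPoisson_recurrence ν⟩
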